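/- arXiv:1210.6170 — 5 statements merged into one kernel-verified Lean document; each statement's English description precedes it below -/
import Mathlib

section
/- Let n ∈ ℕ, σ > 0, and c, x, t ∈ ℝⁿ. Then exp(-‖x-t‖²/σ²) = exp(-‖x-c‖²/σ²)·exp(-‖t-c‖²/σ²)·∑_{k=0}^∞ ((2/σ²)^k / k!) ∑_{|α|=k} C^k_α (x-c)^α (t-c)^α, where the series converges absolutely. -/
/-!
Expanding `‖x - t‖² = ‖x - c‖² - 2⟪x - c, t - c⟫ + ‖t - c‖²` reduces the claim to
`exp (a ∑ uᵢvᵢ) = ∑ₖ aᵏ/k! (∑ᵢ uᵢvᵢ)ᵏ` with `a = 2/σ²`, and the multinomial theorem splits the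
`k`-th power into the sum over `|α| = k`. Absolute convergence of the family indexed by all
multi-indices follows by grouping `|α|`-fibres of its absolute values, which are again terms of
the same shape and sum to the convergent series of `exp (|a| ∑ |uᵢ||vᵢ|)`.
-/
open Finset

section

variable {ι : Type*} [Fintype ι]

def sumEqEquivMemPiAntidiag [DecidableEq ι] (k : ℕ) :
    {α : ι → ℕ // ∑ i, α i = k} ≃ {α // α ∈ piAntidiag (univ : Finset ι) k} :=
  Equiv.subtypeEquivRight fun _ => by simp [mem_piAntidiag]

instance finite_subtype_sum_eq (k : ℕ) : Finite {α : ι → ℕ // ∑ i, α i = k} := by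
  classical
  exact .of_equiv _ (sumEqEquivMemPiAntidiag k).symm

theorem tsum_multinomial_mul_prod_pow_mul_prod_pow (u v : ι → ℝ) (k : ℕ) :
    ∑' α : {α : ι → ℕ // ∑ i, α i = k},
        (Nat.multinomial univ α.1 : ℝ) * ((∏ i, u i ^ α.1 i) * ∏ i, v i ^ α.1 i) =
      (∑ i, u i * v i) ^ k := by
  classical
  rw [sum_pow_eq_sum_piAntidiag, ← Finset.tsum_subtype,
    ← (sumEqEquivMemPiAntidiag k).tsum_eq]
  simp only [mul_pow, prod_mul_distrib]
  rfl

noncomputable def expInnerTerm (a : ℝ) (u v : ι → ℝ) (α : ι → ℕ) : ℝ :=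
  a ^ (∑ i, α i) / ((∑ i, α i).factorial : ℝ) * (Nat.multinomial univ α : ℝ) *
    ((∏ i, u i ^ α i) * ∏ i, v i ^ α i)

theorem tsum_expInnerTerm_of_sum_eq (a : ℝ) (u v : ι → ℝ) (k : ℕ) :
    ∑' α : {α : ι → ℕ // ∑ i, α i = k}, expInnerTerm a u v α =
      (a * ∑ i, u i * v i) ^ k / k.factorial := by
  have hfiber : ∀ α : {α : ι → ℕ // ∑ i, α i = k}, expInnerTerm a u v α =
      a ^ k / k.factorial *
        ((Nat.multinomial univ α.1 : ℝ) * ((∏ i, u i ^ α.1 i) * ∏ i, v i ^ α.1 i)) := by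
    rintro ⟨α, rfl⟩
    rw [expInnerTerm, mul_assoc]
  rw [tsum_congr hfiber, tsum_mul_left, tsum_multinomial_mul_prod_pow_mul_prod_pow, mul_pow]
  ring

theorem expInnerTerm_nonneg {a : ℝ} {u v : ι → ℝ} (ha : 0 ≤ a) (hu : 0 ≤ u) (hv : 0 ≤ v)
    (α : ι → ℕ) : 0 ≤ expInnerTerm a u v α := by
  have hprod : 0 ≤ (∏ i, u i ^ α i) * ∏ i, v i ^ α i :=
    mul_nonneg (prod_nonneg fun i _ => pow_nonneg (hu i) _)
      (prod_nonneg fun i _ => pow_nonneg (hv i) _)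
  unfold expInnerTerm
  positivity

theorem abs_expInnerTerm (a : ℝ) (u v : ι → ℝ) (α : ι → ℕ) :
    |expInnerTerm a u v α| = expInnerTerm |a| |u| |v| α := by
  simp only [expInnerTerm, abs_mul, abs_div, abs_pow, abs_prod, Nat.abs_cast, Pi.abs_apply]

theorem summable_expInnerTerm (a : ℝ) (u v : ι → ℝ) : Summable (expInnerTerm a u v) := by
  have hnonneg := expInnerTerm_nonneg (abs_nonneg a) (abs_nonneg u) (abs_nonneg v)
  have habs : Summable (expInnerTerm |a| |u| |v|) := by
    rw [← (Equiv.sigmaFiberEquiv fun α : ι → ℕ => ∑ i, α i).summable_iff]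
    refine (summable_sigma_of_nonneg fun _ => hnonneg _).mpr ⟨fun _ => .of_finite, ?_⟩
    simpa only [Equiv.sigmaFiberEquiv_apply, tsum_expInnerTerm_of_sum_eq]
      using Real.summable_pow_div_factorial _
  exact .of_abs (by simpa only [abs_expInnerTerm] using habs)

theorem exp_mul_sum_mul_eq_tsum (a : ℝ) (u v : ι → ℝ) :
    Real.exp (a * ∑ i, u i * v i) =
      ∑' k : ℕ, a ^ k / k.factorial *
        ∑' α : {α : ι → ℕ // ∑ i, α i = k},
          (Nat.multinomial univ α.1 : ℝ) * ((∏ i, u i ^ α.1 i) * ∏ i, v i ^ α.1 i) := by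
  simp only [tsum_multinomial_mul_prod_pow_mul_prod_pow, Real.exp_eq_exp_ℝ,
    NormedSpace.exp_eq_tsum_div, mul_pow, div_mul_eq_mul_div]

end

theorem EuclideanSpace.norm_sub_sq_eq {n : ℕ} (x t c : EuclideanSpace ℝ (Fin n)) :
    ‖x - t‖ ^ 2 = ‖x - c‖ ^ 2 - 2 * ∑ i, (x i - c i) * (t i - c i) + ‖t - c‖ ^ 2 := by
  rw [← sub_sub_sub_cancel_right x t c, norm_sub_sq_real, EuclideanSpace.inner_eq_star_dotProduct]
  simp [dotProduct, mul_comm]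

theorem gaussian_kernel_expansion_general (n : ℕ) (σ : ℝ)
    (c x t : EuclideanSpace ℝ (Fin n)) :
    Summable (fun α : Fin n → ℕ =>
      (2 / σ ^ 2) ^ (∑ i, α i) / ((∑ i, α i).factorial : ℝ) *
        (Nat.multinomial Finset.univ α : ℝ) *
        ((∏ i, (x i - c i) ^ α i) * ∏ i, (t i - c i) ^ α i)) ∧
    Real.exp (-‖x - t‖ ^ 2 / σ ^ 2) =
      Real.exp (-‖x - c‖ ^ 2 / σ ^ 2) * Real.exp (-‖t - c‖ ^ 2 / σ ^ 2) *
        ∑' k : ℕ, (2 / σ ^ 2) ^ k / (k.factorial : ℝ) *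
          ∑' α : {α : Fin n → ℕ // ∑ i, α i = k},
            (Nat.multinomial Finset.univ α.1 : ℝ) *
              ((∏ i, (x i - c i) ^ α.1 i) * ∏ i, (t i - c i) ^ α.1 i) := by
  refine ⟨summable_expInnerTerm (2 / σ ^ 2) (fun i => x i - c i) (fun i => t i - c i), ?_⟩
  rw [← exp_mul_sum_mul_eq_tsum, ← Real.exp_add, ← Real.exp_add,
    EuclideanSpace.norm_sub_sq_eq x t c]
  congr 1
  ring

/-- For `n ∈ ℕ`, `σ > 0`, `c, x, t ∈ ℝⁿ`,
`exp(-‖x-t‖²/σ²) = exp(-‖x-c‖²/σ²)·exp(-‖t-c‖²/σ²)·∑_{k=0}^∞ ((2/σ²)^k/k!) ∑_{|α|=k} C^k_α (x-c)^α (t-c)^α`,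
the series converging absolutely. -/
theorem gaussian_kernel_expansion (n : ℕ) (σ : ℝ) (hσ : 0 < σ)
    (c x t : EuclideanSpace ℝ (Fin n)) :
    Summable (fun α : Fin n → ℕ =>
      (2 / σ ^ 2) ^ (∑ i, α i) / ((∑ i, α i).factorial : ℝ) *
        (Nat.multinomial Finset.univ α : ℝ) *
        ((∏ i, (x i - c i) ^ α i) * ∏ i, (t i - c i) ^ α i)) ∧
    Real.exp (-‖x - t‖ ^ 2 / σ ^ 2) =
      Real.exp (-‖x - c‖ ^ 2 / σ ^ 2) * Real.exp (-‖t - c‖ ^ 2 / σ ^ 2) *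
        ∑' k : ℕ, (2 / σ ^ 2) ^ k / (k.factorial : ℝ) *
          ∑' α : {α : Fin n → ℕ // ∑ i, α i = k},
            (Nat.multinomial Finset.univ α.1 : ℝ) *
              ((∏ i, (x i - c i) ^ α.1 i) * ∏ i, (t i - c i) ^ α.1 i) :=
  gaussian_kernel_expansion_general n σ c x t
end

section
/- Let n ∈ ℕ, σ > 0, c ∈ ℝⁿ, and X ⊆ ℝⁿ. For every x, t ∈ X, the family {φ_{α,c}(x)·φ_{α,c}(t)}_{α ∈ (ℕ∪{0})ⁿ} is absolutely summable with sum ∑_{k=0}^∞ ∑_{|α|=k} φ_{α,c}(x) φ_{α,c}(t) = exp(-‖x-t‖²/σ²). -/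
/-!
Writing `u = x - c`, `w = t - c` and `s = σ²`, the product `φ_α(x) φ_α(t)` equals
`e^{-‖u‖²/s} e^{-‖w‖²/s} ∏ᵢ vᵢ^{αᵢ}/αᵢ!` with `vᵢ = (2/s) uᵢ wᵢ`, because `C^k_α / k! = 1 / ∏ᵢ αᵢ!`.
Over `α ∈ ℕⁿ` these products form an absolutely summable family with sum `∏ᵢ e^{vᵢ} = e^{(2/s)⟪u, w⟫}`,
being a product of `n` absolutely convergent exponential series, and
`‖u - w‖² = ‖u‖² - 2⟪u, w⟫ + ‖w‖²` turns the total into `e^{-‖x - t‖²/s}`.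
Grouping the terms by `|α| = k` is then a rearrangement.
-/

/-- The function `φ_{α,c}(x) = √((2/σ²)^k C^k_α / k!)·e^{-‖x-c‖²/σ²}·(x-c)^α` where `k = |α|`. -/
noncomputable def phiFn (n : ℕ) (σ : ℝ) (c : EuclideanSpace ℝ (Fin n)) (α : Fin n → ℕ)
    (x : EuclideanSpace ℝ (Fin n)) : ℝ :=
  Real.sqrt ((2 / σ ^ 2) ^ (∑ i, α i) * (Nat.multinomial Finset.univ α : ℝ) /
      ((∑ i, α i).factorial : ℝ)) *
    Real.exp (-‖x - c‖ ^ 2 / σ ^ 2) * ∏ i, (x i - c i) ^ α i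

open Finset

section PiProd

variable {R β : Type*} [NormedCommRing R]

lemma prod_consEquiv_apply {n : ℕ} (f : Fin (n + 1) → β → R) (p : β × (Fin n → β)) :
    ∏ i, f i (Fin.consEquiv (fun _ => β) p i) = f 0 p.1 * ∏ i, f i.succ (p.2 i) := by
  simp [Fin.prod_univ_succ]

lemma summable_norm_pi_prod {n : ℕ} {f : Fin n → β → R}
    (hf : ∀ i, Summable fun b => ‖f i b‖) :
    Summable fun g : Fin n → β => ‖∏ i, f i (g i)‖ := by
  induction n with
  | zero => exact Summable.of_finite
  | succ n ih =>
    refine (Fin.consEquiv fun _ => β).summable_iff.mp ?_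
    simp only [Function.comp_def, prod_consEquiv_apply]
    -- `(e :)` elaborates `e` before unifying with the goal; the other order makes Lean unfold
    -- `Finset.prod` while solving the non-pattern problem `?g p.2 =?= ∏ i, f i.succ (p.2 i)`.
    exact ((hf 0).mul_norm (ih fun i => hf i.succ) :)

theorem hasSum_pi_prod [CompleteSpace R] {n : ℕ} {f : Fin n → β → R} {a : Fin n → R}
    (hf : ∀ i, HasSum (f i) (a i)) (hf' : ∀ i, Summable fun b => ‖f i b‖) :
    HasSum (fun g : Fin n → β => ∏ i, f i (g i)) (∏ i, a i) := by
  induction n with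
  | zero => simp
  | succ n ih =>
    refine (Fin.consEquiv fun _ => β).hasSum_iff.mp ?_
    simp only [Function.comp_def, prod_consEquiv_apply]
    rw [Fin.prod_univ_succ]
    have htail := ih (fun i => hf i.succ) fun i => hf' i.succ
    have hprod := summable_mul_of_summable_norm (hf' 0) (summable_norm_pi_prod fun i => hf' i.succ)
    exact ((hf 0).mul htail hprod :)

end PiProd

theorem Real.hasSum_prod_pow_div_factorial {n : ℕ} (v : Fin n → ℝ) :
    HasSum (fun α : Fin n → ℕ => ∏ i, v i ^ α i / ((α i).factorial : ℝ))
      (Real.exp (∑ i, v i)) := by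
  have hexp (i : Fin n) : HasSum (fun m : ℕ => v i ^ m / (m.factorial : ℝ)) (Real.exp (v i)) := by
    rw [Real.exp_eq_exp_ℝ]
    exact NormedSpace.expSeries_div_hasSum_exp (v i)
  rw [Real.exp_sum]
  exact (hasSum_pi_prod hexp fun i => NormedSpace.norm_expSeries_div_summable (v i) :)

lemma Nat.multinomial_div_factorial_sum {ι : Type*} [Fintype ι] (α : ι → ℕ) :
    (Nat.multinomial univ α : ℝ) / ((∑ i, α i).factorial : ℝ) =
      (∏ i, ((α i).factorial : ℝ))⁻¹ := by
  rw [div_eq_iff (by positivity), ← Nat.multinomial_spec univ α]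
  push_cast
  field_simp

lemma exp_mul_exp_mul_exp_inner {E : Type*} [NormedAddCommGroup E] [InnerProductSpace ℝ E]
    (u w : E) (s : ℝ) :
    Real.exp (-‖u‖ ^ 2 / s) * Real.exp (-‖w‖ ^ 2 / s) * Real.exp (2 / s * inner ℝ u w) =
      Real.exp (-‖u - w‖ ^ 2 / s) := by
  rw [← Real.exp_add, ← Real.exp_add, norm_sub_sq_real]
  ring_nf

lemma EuclideanSpace.real_inner_eq_sum {n : ℕ} (x y : EuclideanSpace ℝ (Fin n)) :
    inner ℝ x y = ∑ i, x i * y i := by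
  simp [PiLp.inner_apply, mul_comm]

lemma phiFn_mul_phiFn (n : ℕ) (σ : ℝ) (c : EuclideanSpace ℝ (Fin n)) (α : Fin n → ℕ)
    (x t : EuclideanSpace ℝ (Fin n)) :
    phiFn n σ c α x * phiFn n σ c α t =
      Real.exp (-‖x - c‖ ^ 2 / σ ^ 2) * Real.exp (-‖t - c‖ ^ 2 / σ ^ 2) *
        ∏ i, (2 / σ ^ 2 * ((x - c) i * (t - c) i)) ^ α i / ((α i).factorial : ℝ) := by
  have hcoef : (2 / σ ^ 2) ^ (∑ i, α i) * (Nat.multinomial univ α : ℝ) /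
      ((∑ i, α i).factorial : ℝ) = (2 / σ ^ 2) ^ (∑ i, α i) / ∏ i, ((α i).factorial : ℝ) := by
    rw [mul_div_assoc, Nat.multinomial_div_factorial_sum, ← div_eq_mul_inv]
  have hsqrt := Real.mul_self_sqrt (x := (2 / σ ^ 2) ^ (∑ i, α i) / ∏ i, ((α i).factorial : ℝ))
    (by positivity)
  simp only [phiFn, hcoef, prod_div_distrib, mul_pow, prod_mul_distrib, prod_pow_eq_pow_sum,
    PiLp.sub_apply]
  linear_combination (Real.exp (-‖x - c‖ ^ 2 / σ ^ 2) * Real.exp (-‖t - c‖ ^ 2 / σ ^ 2) *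
    (∏ i, (x i - c i) ^ α i) * ∏ i, (t i - c i) ^ α i) * hsqrt

theorem phi_family_summable_sum_eq_gaussian_general (n : ℕ) (σ : ℝ)
    (c : EuclideanSpace ℝ (Fin n))
    (x t : EuclideanSpace ℝ (Fin n)) :
    Summable (fun α : Fin n → ℕ => phiFn n σ c α x * phiFn n σ c α t) ∧
    (∑' k : ℕ, ∑' α : {α : Fin n → ℕ // ∑ i, α i = k}, phiFn n σ c α.1 x * phiFn n σ c α.1 t)
      = Real.exp (-‖x - t‖ ^ 2 / σ ^ 2) := by
  have hsum : HasSum (fun α : Fin n → ℕ => phiFn n σ c α x * phiFn n σ c α t)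
      (Real.exp (-‖x - t‖ ^ 2 / σ ^ 2)) := by
    have hgauss : Real.exp (-‖x - c‖ ^ 2 / σ ^ 2) * Real.exp (-‖t - c‖ ^ 2 / σ ^ 2) *
        Real.exp (∑ i, 2 / σ ^ 2 * ((x - c) i * (t - c) i)) = Real.exp (-‖x - t‖ ^ 2 / σ ^ 2) := by
      rw [← mul_sum, ← EuclideanSpace.real_inner_eq_sum, exp_mul_exp_mul_exp_inner,
        sub_sub_sub_cancel_right]
    simp only [phiFn_mul_phiFn, ← hgauss]
    exact (Real.hasSum_prod_pow_div_factorial _).mul_left _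
  exact ⟨hsum.summable, (hsum.tsum_fiberwise _).tsum_eq⟩

/-- For every `x, t ∈ X`, the family `{φ_{α,c}(x)·φ_{α,c}(t)}_α` is absolutely
summable with `∑_{k=0}^∞ ∑_{|α|=k} φ_{α,c}(x) φ_{α,c}(t) = exp(-‖x-t‖²/σ²)`. -/
theorem phi_family_summable_sum_eq_gaussian (n : ℕ) (σ : ℝ) (hσ : 0 < σ)
    (c : EuclideanSpace ℝ (Fin n)) (X : Set (EuclideanSpace ℝ (Fin n)))
    (x t : EuclideanSpace ℝ (Fin n)) (hx : x ∈ X) (ht : t ∈ X) :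
    Summable (fun α : Fin n → ℕ => phiFn n σ c α x * phiFn n σ c α t) ∧
    (∑' k : ℕ, ∑' α : {α : Fin n → ℕ // ∑ i, α i = k}, phiFn n σ c α.1 x * phiFn n σ c α.1 t)
      = Real.exp (-‖x - t‖ ^ 2 / σ ^ 2) :=
  phi_family_summable_sum_eq_gaussian_general n σ c x t
end

section
/- Let σ > 0, c ∈ ℝ, and μ ∈ ℝ with 0 < μ < 2. Let X ⊆ ℝ have non-empty interior, let K(x,t) = exp(-(x-t)²/σ²), and let H_K be the RKHS of K on X. Then the function x ↦ exp(-μ(x-c)²/σ²), restricted to X, belongs to H_K with ‖exp(-μ(·-c)²/σ²)‖²_{H_K} = 1/√(μ(2-μ)) = 1/√(1-(μ-1)²). -/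
/-!
The Gaussian kernel has an explicit feature map into `ℓ²(ℕ)`: with `ψ(u)ₙ = uⁿ / √n!` one has
`⟪ψ u, ψ w⟫ = exp (u w)`, hence `K(x, t) = ⟪Φ x, Φ t⟫` for
`Φ x = exp (-(x-c)²/σ²) • ψ (√2 (x-c)/σ)`. For `w ∈ ℓ²` the function `u ↦ ⟪ψ u, w⟫` is an entire
power series with coefficients `wₙ / √n!`, so if `X` has interior the vectors `Φ x` span a dense
subspace, and matching Gram matrices make `w ↦ ⟪w, Φ ·⟫` an isometry of `ℓ²` onto `H_K`.
The target is `⟪v, Φ ·⟫` for `a = (1 - μ)/2` and the vector `v` with `⟪v, ψ u⟫ = exp (a u²)`,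
i.e. `v_{2j} = a^j √(2j)! / j!` and `v_{2j+1} = 0`, whose squared norm is
`∑ C(2j, j) a^{2j} = 1 / √(1 - 4a²)`.
-/

open scoped RealInnerProductSpace

/-- A Hilbert space of real-valued functions on `X`: a Hilbert space `carrier` together with an
injective linear realization of its elements as functions `X → ℝ` (so that the vector space
operations are pointwise). -/
structure HilbertFunSpace (X : Type*) where
  carrier : Type
  [ng : NormedAddCommGroup carrier]
  [ip : InnerProductSpace ℝ carrier]
  [cs : CompleteSpace carrier]
  toFun : carrier → X → ℝ
  add' : ∀ f g : carrier, toFun (f + g) = toFun f + toFun g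
  smul' : ∀ (a : ℝ) (f : carrier), toFun (a • f) = a • toFun f
  inj' : Function.Injective toFun

attribute [instance] HilbertFunSpace.ng HilbertFunSpace.ip HilbertFunSpace.cs

/-- `S` is a reproducing kernel Hilbert space with kernel `K`. -/
def HilbertFunSpace.IsRKHS {X : Type*} (S : HilbertFunSpace X) (K : X → X → ℝ) : Prop :=
  ∀ x : X, ∃ kx : S.carrier, S.toFun kx = (fun y => K x y) ∧
    ∀ f : S.carrier, ⟪f, kx⟫ = S.toFun f x

open scoped Nat lp

theorem Real.hasSum_pow_div_factorial (x : ℝ) : HasSum (fun n => x ^ n / n !) (Real.exp x) := by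
  rw [Real.exp_eq_exp_ℝ]
  exact NormedSpace.expSeries_div_hasSum_exp x

theorem hasSum_of_hasSum_two_mul {α : Type*} [AddCommMonoid α] [TopologicalSpace α]
    {f : ℕ → α} {l : α} (hodd : ∀ n, ¬Even n → f n = 0) (h : HasSum (fun j => f (2 * j)) l) :
    HasSum f l :=
  ((mul_right_injective₀ (two_ne_zero : (2 : ℕ) ≠ 0)).hasSum_iff fun n hn =>
    hodd n fun ⟨j, hj⟩ => hn ⟨j, by simp only; omega⟩).mp h

theorem Ring.choose_succ_eq_mul_div {K : Type*} [Field K] [CharZero K] (a : K) (n : ℕ) :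
    Ring.choose a (n + 1) = Ring.choose a n * (a - n) / (n + 1) := by
  rw [Ring.choose_eq_smul, Ring.choose_eq_smul, descPochhammer_succ_right, Polynomial.smeval_mul,
    Polynomial.smeval_sub, Polynomial.smeval_X, Polynomial.smeval_natCast]
  simp only [smul_eq_mul, Nat.factorial_succ, Nat.cast_mul, Nat.cast_succ, pow_one, pow_zero,
    nsmul_eq_mul, mul_one]
  field_simp

theorem cast_centralBinom_eq_choose_neg_half_mul (n : ℕ) :
    (Nat.centralBinom n : ℝ) = Ring.choose (-(1 / 2) : ℝ) n * (-4) ^ n := by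
  induction n with
  | zero => simp
  | succ n ih =>
    have h : ((n + 1 : ℕ) : ℝ) * Nat.centralBinom (n + 1) = 2 * (2 * n + 1) * Nat.centralBinom n :=
      mod_cast Nat.succ_mul_centralBinom_succ n
    rw [ih] at h
    push_cast at h
    rw [Ring.choose_succ_eq_mul_div, pow_succ]
    field_simp
    linear_combination 2 * h

theorem hasSum_centralBinom_mul_pow {y : ℝ} (hy : |y| < 1 / 4) :
    HasSum (fun n => (Nat.centralBinom n : ℝ) * y ^ n) (1 / √(1 - 4 * y)) := by
  have hx : -4 * y ∈ Metric.eball (0 : ℝ) 1 := by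
    rw [Metric.mem_eball, edist_zero_right, ← ofReal_norm, ENNReal.ofReal_lt_one, norm_mul]
    norm_num
    linarith
  have h := (Real.one_add_rpow_hasFPowerSeriesOnBall_zero (a := -(1 / 2))).hasSum hx
  have hterm : (fun n => binomialSeries ℝ (-(1 / 2) : ℝ) n fun _ => -4 * y) =
      fun n => (Nat.centralBinom n : ℝ) * y ^ n := by
    ext n
    simp only [binomialSeries_apply, List.ofFn_const, List.prod_replicate, smul_eq_mul,
      cast_centralBinom_eq_choose_neg_half_mul, mul_pow]
    ring
  have hval : (1 + (0 + -4 * y)) ^ (-(1 / 2) : ℝ) = 1 / √(1 - 4 * y) := by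
    rw [Real.sqrt_eq_rpow, Real.rpow_neg (by linarith [abs_lt.mp hy]), one_div]
    ring_nf
  rwa [hterm, hval] at h

theorem memℓp_two_of_summable_sq {ι : Type*} {f : ι → ℝ} (hf : Summable fun i => f i ^ 2) :
    Memℓp f 2 :=
  memℓp_gen (by simpa using hf)

theorem lp.hasSum_mul {ι : Type*} (f g : ℓ²(ι, ℝ)) : HasSum (fun i => f i * g i) ⟪f, g⟫ := by
  simpa [mul_comm] using lp.hasSum_inner (𝕜 := ℝ) f g

theorem sq_pow_div_sqrt_factorial (u : ℝ) (n : ℕ) :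
    (u ^ n / √(n ! : ℝ)) ^ 2 = (u ^ 2) ^ n / n ! := by
  rw [div_pow, Real.sq_sqrt (by positivity), ← pow_mul, ← pow_mul, mul_comm]

noncomputable def expFeature (u : ℝ) : ℓ²(ℕ, ℝ) :=
  ⟨fun n => u ^ n / √(n ! : ℝ), memℓp_two_of_summable_sq <| by
    simpa only [sq_pow_div_sqrt_factorial] using Real.summable_pow_div_factorial (u ^ 2)⟩

@[simp]
theorem expFeature_apply (u : ℝ) (n : ℕ) : expFeature u n = u ^ n / √(n ! : ℝ) := rfl

theorem inner_expFeature (u w : ℝ) : ⟪expFeature u, expFeature w⟫ = Real.exp (u * w) := by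
  refine (lp.hasSum_mul _ _).unique ?_
  convert Real.hasSum_pow_div_factorial (u * w) using 2 with n
  simp only [expFeature_apply]
  rw [mul_pow, div_mul_div_comm, Real.mul_self_sqrt (by positivity)]

open FormalMultilinearSeries in
theorem hasFPowerSeriesOnBall_inner_expFeature (w : ℓ²(ℕ, ℝ)) :
    HasFPowerSeriesOnBall (fun u => ⟪expFeature u, w⟫)
      (ofScalars ℝ fun n => w n / √(n ! : ℝ)) 0 ⊤ := by
  refine ⟨?_, ENNReal.zero_lt_top, fun {u} _ => ?_⟩
  · refine le_of_eq (radius_eq_top_of_summable_norm _ fun r => ?_).symm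
    refine (lp.summable_mul (p := 2) (q := 2) (by simpa using Real.HolderConjugate.two_two) w
      (expFeature r)).congr fun n => ?_
    simp only [ofScalars_norm, expFeature_apply, Real.norm_eq_abs, abs_div, abs_pow,
      NNReal.abs_eq, abs_of_nonneg (Real.sqrt_nonneg _)]
    ring
  · rw [zero_add]
    refine (lp.hasSum_mul (expFeature u) w).congr_fun fun n => ?_
    simp only [ofScalars_apply_eq, expFeature_apply, smul_eq_mul]
    ring

theorem eq_zero_of_inner_expFeature_eventually_eq_zero {w : ℓ²(ℕ, ℝ)} {u₀ : ℝ}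
    (hw : ∀ᶠ u in nhds u₀, ⟪expFeature u, w⟫ = 0) : w = 0 := by
  have hps := hasFPowerSeriesOnBall_inner_expFeature w
  have hzero : Set.EqOn (fun u => ⟪expFeature u, w⟫) 0 Set.univ :=
    AnalyticOnNhd.eqOn_zero_of_preconnected_of_eventuallyEq_zero (𝕜 := ℝ)
      (fun _ _ => hps.analyticAt_of_mem (by simp)) isPreconnected_univ (Set.mem_univ u₀) hw
  have hcoeff := (hps.hasFPowerSeriesAt.congr (hzero.eventuallyEq_of_mem Filter.univ_mem)).eq_zero
  ext n
  simpa [Nat.factorial_ne_zero] using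
    congrFun ((FormalMultilinearSeries.ofScalars_series_eq_zero ℝ).mp hcoeff) n

noncomputable def gaussCoeff (a : ℝ) (n : ℕ) : ℝ :=
  if Even n then a ^ (n / 2) * √(n ! : ℝ) / (n / 2)! else 0

theorem gaussCoeff_of_not_even (a : ℝ) {n : ℕ} (hn : ¬Even n) : gaussCoeff a n = 0 := by
  simp [gaussCoeff, hn]

theorem gaussCoeff_two_mul (a : ℝ) (j : ℕ) :
    gaussCoeff a (2 * j) = a ^ j * √((2 * j)! : ℝ) / j ! := by
  simp [gaussCoeff]

theorem hasSum_gaussCoeff_sq {a : ℝ} (ha : a ^ 2 < 1 / 4) :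
    HasSum (fun n => gaussCoeff a n ^ 2) (1 / √(1 - 4 * a ^ 2)) := by
  refine hasSum_of_hasSum_two_mul (fun n hn => by simp [gaussCoeff_of_not_even a hn]) ?_
  refine (hasSum_centralBinom_mul_pow (by rwa [abs_of_nonneg (sq_nonneg a)])).congr_fun
    fun j => ?_
  rw [gaussCoeff_two_mul, Nat.centralBinom_eq_two_mul_choose, Nat.cast_choose ℝ (by omega),
    div_pow, mul_pow, Real.sq_sqrt (by positivity), show 2 * j - j = j by omega]
  field_simp
  ring

theorem hasSum_gaussCoeff_mul_expFeature (a u : ℝ) :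
    HasSum (fun n => gaussCoeff a n * expFeature u n) (Real.exp (a * u ^ 2)) := by
  refine hasSum_of_hasSum_two_mul (fun n hn => by simp [gaussCoeff_of_not_even a hn]) ?_
  refine (Real.hasSum_pow_div_factorial (a * u ^ 2)).congr_fun fun j => ?_
  rw [gaussCoeff_two_mul, expFeature_apply]
  field_simp
  ring

noncomputable def gaussVec (a : ℝ) (ha : a ^ 2 < 1 / 4) : ℓ²(ℕ, ℝ) :=
  ⟨gaussCoeff a, memℓp_two_of_summable_sq (hasSum_gaussCoeff_sq ha).summable⟩

@[simp]
theorem gaussVec_apply {a : ℝ} (ha : a ^ 2 < 1 / 4) (n : ℕ) : gaussVec a ha n = gaussCoeff a n :=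
  rfl

theorem norm_gaussVec_sq {a : ℝ} (ha : a ^ 2 < 1 / 4) :
    ‖gaussVec a ha‖ ^ 2 = 1 / √(1 - 4 * a ^ 2) := by
  rw [← real_inner_self_eq_norm_sq]
  exact (lp.hasSum_mul _ _).unique ((hasSum_gaussCoeff_sq ha).congr_fun fun n => by simp [sq])

theorem inner_gaussVec_expFeature {a : ℝ} (ha : a ^ 2 < 1 / 4) (u : ℝ) :
    ⟪gaussVec a ha, expFeature u⟫ = Real.exp (a * u ^ 2) :=
  (lp.hasSum_mul _ _).unique (hasSum_gaussCoeff_mul_expFeature a u)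

noncomputable def gaussFeature (σ c x : ℝ) : ℓ²(ℕ, ℝ) :=
  Real.exp (-(x - c) ^ 2 / σ ^ 2) • expFeature (√2 * (x - c) / σ)

theorem inner_gaussFeature (σ c x y : ℝ) :
    ⟪gaussFeature σ c x, gaussFeature σ c y⟫ = Real.exp (-(x - y) ^ 2 / σ ^ 2) := by
  rw [gaussFeature, gaussFeature, real_inner_smul_left, real_inner_smul_right, inner_expFeature,
    ← Real.exp_add, ← Real.exp_add]
  congr 1
  have h2 : √2 * √2 = 2 := Real.mul_self_sqrt zero_le_two
  simp only [div_eq_mul_inv]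
  linear_combination (x - c) * (y - c) * σ⁻¹ ^ 2 * h2

theorem inner_gaussVec_gaussFeature {a : ℝ} (ha : a ^ 2 < 1 / 4) (σ c x : ℝ) :
    ⟪gaussVec a ha, gaussFeature σ c x⟫ = Real.exp (-((1 - 2 * a) * (x - c) ^ 2) / σ ^ 2) := by
  rw [gaussFeature, real_inner_smul_right, inner_gaussVec_expFeature, ← Real.exp_add]
  congr 1
  have h2 : √2 ^ 2 = 2 := Real.sq_sqrt zero_le_two
  simp only [div_eq_mul_inv, mul_pow]
  linear_combination a * (x - c) ^ 2 * σ⁻¹ ^ 2 * h2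

theorem topologicalClosure_span_gaussFeature {σ : ℝ} (hσ : σ ≠ 0) (c : ℝ) {X : Set ℝ}
    (hX : (interior X).Nonempty) :
    (Submodule.span ℝ (Set.range fun x : X => gaussFeature σ c x)).topologicalClosure = ⊤ := by
  rw [Submodule.topologicalClosure_eq_top_iff, Submodule.eq_bot_iff]
  intro w hw
  obtain ⟨t₀, ht₀⟩ := hX
  have hinv : Filter.Tendsto (fun u => c + σ * u / √2) (nhds (√2 * (t₀ - c) / σ)) (nhds t₀) := by
    have hcont : Continuous fun u : ℝ => c + σ * u / √2 := by fun_prop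
    convert hcont.tendsto _ using 2
    field_simp
    ring
  apply eq_zero_of_inner_expFeature_eventually_eq_zero
  filter_upwards [hinv (mem_interior_iff_mem_nhds.mp ht₀)] with u hu
  have h := (Submodule.mem_orthogonal _ w).mp hw _ (Submodule.subset_span ⟨⟨_, hu⟩, rfl⟩)
  simp only [gaussFeature, real_inner_smul_left, mul_eq_zero, Real.exp_ne_zero, false_or] at h
  convert h using 3
  field_simp
  ring

section GramMatrix

variable {ι E F : Type*} [NormedAddCommGroup E] [InnerProductSpace ℝ E]
  [NormedAddCommGroup F] [InnerProductSpace ℝ F] {Φ : ι → E} {k : ι → F}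

theorem inner_linearCombination_left_eq_of_gram_eq (hgram : ∀ i j, ⟪Φ i, Φ j⟫ = ⟪k i, k j⟫)
    (d : ι →₀ ℝ) (j : ι) :
    ⟪Finsupp.linearCombination ℝ Φ d, Φ j⟫ = ⟪Finsupp.linearCombination ℝ k d, k j⟫ := by
  simp only [Finsupp.linearCombination_apply, Finsupp.sum, sum_inner, real_inner_smul_left, hgram]

theorem norm_linearCombination_eq_of_gram_eq (hgram : ∀ i j, ⟪Φ i, Φ j⟫ = ⟪k i, k j⟫)
    (d : ι →₀ ℝ) :
    ‖Finsupp.linearCombination ℝ Φ d‖ = ‖Finsupp.linearCombination ℝ k d‖ := by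
  have h : ⟪Finsupp.linearCombination ℝ Φ d, Finsupp.linearCombination ℝ Φ d⟫ =
      ⟪Finsupp.linearCombination ℝ k d, Finsupp.linearCombination ℝ k d⟫ := by
    simp only [Finsupp.linearCombination_apply, Finsupp.sum, sum_inner, inner_sum,
      real_inner_smul_left, real_inner_smul_right, hgram]
  rw [real_inner_self_eq_norm_sq, real_inner_self_eq_norm_sq] at h
  exact (sq_eq_sq₀ (norm_nonneg _) (norm_nonneg _)).mp h

/-- `∑ dᵢ Φ i ↦ ∑ dᵢ k i` is an isometry, so it extends from the span of `Φ` to its closure. -/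
theorem exists_inner_eq_of_gram_eq [CompleteSpace F] (hgram : ∀ i j, ⟪Φ i, Φ j⟫ = ⟪k i, k j⟫)
    {v : E} (hv : v ∈ (Submodule.span ℝ (Set.range Φ)).topologicalClosure) :
    ∃ g : F, ‖g‖ = ‖v‖ ∧ ∀ i, ⟪g, k i⟫ = ⟪v, Φ i⟫ := by
  set L := Finsupp.linearCombination ℝ Φ
  set M := Finsupp.linearCombination ℝ k
  rw [← SetLike.mem_coe, Submodule.topologicalClosure_coe, mem_closure_iff_seq_limit] at hv
  obtain ⟨s, hs_mem, hs_lim⟩ := hv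
  have hs_range : ∀ n, s n ∈ LinearMap.range L := by
    simpa only [L, Finsupp.range_linearCombination, SetLike.mem_coe] using hs_mem
  choose d hd using hs_range
  have hdist : ∀ m n, dist (M (d m)) (M (d n)) = dist (s m) (s n) := fun m n => by
    rw [dist_eq_norm, dist_eq_norm, ← hd, ← hd, ← map_sub, ← map_sub,
      norm_linearCombination_eq_of_gram_eq hgram]
  have hcauchy : CauchySeq fun n => M (d n) :=
    Metric.cauchySeq_iff.2 fun ε hε => (Metric.cauchySeq_iff.1 hs_lim.cauchySeq ε hε).imp
      fun N hN m hm n hn => (hdist m n).trans_lt (hN m hm n hn)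
  obtain ⟨g, hg⟩ := cauchySeq_tendsto_of_complete hcauchy
  refine ⟨g, tendsto_nhds_unique hg.norm (hs_lim.norm.congr fun n => ?_), fun i =>
    tendsto_nhds_unique (hg.inner tendsto_const_nhds)
      ((hs_lim.inner tendsto_const_nhds).congr fun n => ?_)⟩
  · rw [← hd, norm_linearCombination_eq_of_gram_eq hgram]
  · rw [← hd, inner_linearCombination_left_eq_of_gram_eq hgram]

end GramMatrix

/-- for `0 < μ < 2`, the function `x ↦ exp(-μ(x-c)²/σ²)`, restricted to
`X ⊆ ℝ` (with non-empty interior), belongs to the Gaussian RKHS `H_K` on `X` with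
`‖·‖² = 1/√(μ(2-μ)) = 1/√(1-(μ-1)²)`. -/
theorem gaussian_rkhs_exp_mu_one_dim (σ c μ : ℝ) (hσ : 0 < σ) (hμ0 : 0 < μ) (hμ2 : μ < 2)
    (X : Set ℝ) (hX : (interior X).Nonempty)
    (S : HilbertFunSpace X)
    (hS : S.IsRKHS (fun x t : X => Real.exp (-((x : ℝ) - (t : ℝ)) ^ 2 / σ ^ 2))) :
    ∃ g : S.carrier,
      S.toFun g = (fun x : X => Real.exp (-(μ * ((x : ℝ) - c) ^ 2) / σ ^ 2)) ∧
      ‖g‖ ^ 2 = 1 / Real.sqrt (μ * (2 - μ)) ∧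
      ‖g‖ ^ 2 = 1 / Real.sqrt (1 - (μ - 1) ^ 2) := by
  choose k hk_toFun hk_inner using hS
  have hgram (x y : X) : ⟪gaussFeature σ c x, gaussFeature σ c y⟫ = ⟪k x, k y⟫ := by
    rw [inner_gaussFeature, hk_inner, hk_toFun]
  have ha : ((1 - μ) / 2) ^ 2 < 1 / 4 := by nlinarith
  obtain ⟨g, hg_norm, hg_inner⟩ := exists_inner_eq_of_gram_eq hgram (v := gaussVec _ ha)
    (by rw [topologicalClosure_span_gaussFeature hσ.ne' c hX]; trivial)
  have hg_norm_sq : ‖g‖ ^ 2 = 1 / √(μ * (2 - μ)) := by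
    rw [hg_norm, norm_gaussVec_sq]
    ring_nf
  refine ⟨g, funext fun x => ?_, hg_norm_sq, by rw [hg_norm_sq]; ring_nf⟩
  rw [← hk_inner x g, hg_inner, inner_gaussVec_gaussFeature]
  ring_nf
end

section
/- Let n, d ∈ ℕ and let K : ℝⁿ × ℝⁿ → ℝ be given by K(x,t) = ⟨x,t⟩^d, where ⟨x,t⟩ is the Euclidean inner product. Then the RKHS of K on ℝⁿ is H_d(ℝⁿ), the space of homogeneous polynomials of degree d in n real variables, with the Weyl inner product: for f = ∑_{|α|=d} w_α t^α and g = ∑_{|α|=d} v_α t^α in H_d(ℝⁿ), ⟨f,g⟩_K = ∑_{|α|=d} w_α v_α / C^d_α. -/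
open scoped RealInnerProductSpace

/-! By the multinomial theorem `⟪x, t⟫ ^ d = ∑_α φ_α(x) φ_α(t)` with `φ_α(t) = √(C^d_α) t^α`, and
the monomials are linearly independent functions on `ℝⁿ`. For any finite linearly independent
family `φ`, the span of the `φ_i` with the `φ_i` declared orthonormal is the RKHS of
`∑_i φ_i(x) φ_i(y)`. Writing `∑ w_α t^α = ∑ (w_α / √(C^d_α)) φ_α` gives the Weyl inner product. -/

theorem MvPolynomial.linearIndependent_eval_monomial {σ R : Type*} [CommRing R] [IsDomain R]
    [Infinite R] :
    LinearIndependent R (fun s : σ →₀ ℕ => fun x : σ → R => eval x (monomial s 1)) := by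
  let evalFun : MvPolynomial σ R →ₗ[R] (σ → R) → R :=
    LinearMap.pi fun x => (aeval x).toLinearMap
  have hker : LinearMap.ker evalFun = ⊥ :=
    LinearMap.ker_eq_bot.2 fun p q h => funext fun x => congrFun h x
  have heval : (fun s : σ →₀ ℕ => fun x : σ → R => eval x (monomial s 1)) =
      evalFun ∘ basisMonomials σ R := by
    ext s x
    simp [evalFun]
  rw [heval]
  exact (basisMonomials σ R).linearIndependent.map' evalFun hker

namespace HilbertFunSpace

variable {X : Type*} {ι : Type} [Fintype ι] {φ : ι → X → ℝ}

noncomputable abbrev ofLinearIndependent (hφ : LinearIndependent ℝ φ) :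
    HilbertFunSpace X where
  carrier := EuclideanSpace ℝ ι
  toFun c := ∑ i, c i • φ i
  add' f g := by simp only [PiLp.add_apply, add_smul, Finset.sum_add_distrib]
  smul' a f := by simp only [PiLp.smul_apply, smul_eq_mul, mul_smul, Finset.smul_sum]
  inj' f g h := WithLp.ofLp_injective 2 <| hφ.fintypeLinearCombination_injective <| by
    simpa only [Fintype.linearCombination_apply] using h

variable (hφ : LinearIndependent ℝ φ)

theorem isRKHS_ofLinearIndependent :
    (ofLinearIndependent hφ).IsRKHS fun x y => ∑ i, φ i x * φ i y := by
  intro x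
  refine ⟨WithLp.toLp 2 fun i => φ i x, ?_, fun f => ?_⟩
  · ext y
    simp
  · simp [PiLp.inner_apply, mul_comm]

theorem range_toFun_ofLinearIndependent :
    Set.range (ofLinearIndependent hφ).toFun = {f | ∃ a : ι → ℝ, f = ∑ i, a i • φ i} := by
  ext f
  exact ⟨fun ⟨c, hc⟩ => ⟨c.ofLp, hc.symm⟩, fun ⟨a, ha⟩ => ⟨WithLp.toLp 2 a, ha.symm⟩⟩

theorem inner_ofLinearIndependent {F G : (ofLinearIndependent hφ).carrier} {a b : ι → ℝ}
    (hF : (ofLinearIndependent hφ).toFun F = ∑ i, a i • φ i)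
    (hG : (ofLinearIndependent hφ).toFun G = ∑ i, b i • φ i) :
    ⟪F, G⟫ = ∑ i, a i * b i := by
  obtain rfl : F = (WithLp.toLp 2 a : EuclideanSpace ℝ ι) := (ofLinearIndependent hφ).inj' hF
  obtain rfl : G = (WithLp.toLp 2 b : EuclideanSpace ℝ ι) := (ofLinearIndependent hφ).inj' hG
  simp [PiLp.inner_apply, mul_comm]

end HilbertFunSpace

section Weyl

open Finset

variable {n d : ℕ}

-- The factor `√(C^d_α)` makes these orthonormal for the Weyl inner product.
noncomputable def weylMonomial (α : Fin n → ℕ) (t : EuclideanSpace ℝ (Fin n)) : ℝ :=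
  √(Nat.multinomial univ α) * ∏ i, t i ^ α i

theorem sqrt_multinomial_ne_zero (α : Fin n → ℕ) : √(Nat.multinomial univ α : ℝ) ≠ 0 :=
  (Real.sqrt_pos.2 (mod_cast Nat.multinomial_pos _ _)).ne'

variable (n d) in
theorem linearIndependent_weylMonomial :
    LinearIndependent ℝ fun α : Nat.antidiagonalTuple n d => weylMonomial α.1 := by
  have hmono := (MvPolynomial.linearIndependent_eval_monomial (σ := Fin n) (R := ℝ)).comp
    (Finsupp.equivFunOnFinite.symm ∘ Subtype.val (p := (· ∈ Nat.antidiagonalTuple n d)))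
    (Finsupp.equivFunOnFinite.symm.injective.comp Subtype.val_injective)
  have hker : LinearMap.ker (LinearMap.funLeft ℝ ℝ (WithLp.ofLp (p := 2) (V := Fin n → ℝ))) = ⊥ :=
    LinearMap.ker_eq_bot.2 <|
      LinearMap.funLeft_injective_of_surjective _ _ _ (WithLp.ofLp_surjective 2)
  have hweyl : (fun α : Nat.antidiagonalTuple n d => weylMonomial α.1) =
      (fun α : Nat.antidiagonalTuple n d => Units.mk0 _ (sqrt_multinomial_ne_zero α.1)) •
        (LinearMap.funLeft ℝ ℝ WithLp.ofLp ∘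
          (fun s x => MvPolynomial.eval x (MvPolynomial.monomial s 1)) ∘
            Finsupp.equivFunOnFinite.symm ∘ Subtype.val) := by
    ext α t
    simp [weylMonomial, MvPolynomial.eval_monomial, Finsupp.prod_pow, LinearMap.funLeft]
  rw [hweyl]
  exact (hmono.map' _ hker).units_smul _

theorem inner_pow_eq_sum_weylMonomial (x t : EuclideanSpace ℝ (Fin n)) :
    ⟪x, t⟫ ^ d = ∑ α : Nat.antidiagonalTuple n d, weylMonomial α.1 x * weylMonomial α.1 t := by
  have hinner : ⟪x, t⟫ = ∑ i, x i * t i := by simp [PiLp.inner_apply, mul_comm]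
  rw [hinner, sum_pow_eq_sum_piAntidiag, piAntidiag_univ_fin_eq_antidiagonalTuple, ← sum_coe_sort]
  refine sum_congr rfl fun α _ => ?_
  rw [weylMonomial, weylMonomial, mul_mul_mul_comm, Real.mul_self_sqrt (Nat.cast_nonneg _),
    ← prod_mul_distrib]
  simp only [mul_pow]

theorem sum_monomial_eq_sum_smul_weylMonomial (w : (Fin n → ℕ) → ℝ) :
    (fun t : EuclideanSpace ℝ (Fin n) => ∑ α ∈ Nat.antidiagonalTuple n d, w α * ∏ i, t i ^ α i) =
      ∑ α : Nat.antidiagonalTuple n d, (w α / √(Nat.multinomial univ α.1)) • weylMonomial α.1 := by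
  ext t
  simp only [Finset.sum_apply, Pi.smul_apply, smul_eq_mul, weylMonomial,
    ← sum_coe_sort (Nat.antidiagonalTuple n d)]
  refine sum_congr rfl fun α _ => ?_
  rw [← mul_assoc, div_mul_cancel₀ _ (sqrt_multinomial_ne_zero _)]

theorem exists_sum_monomial_iff (f : EuclideanSpace ℝ (Fin n) → ℝ) :
    (∃ w : (Fin n → ℕ) → ℝ, ∀ t, f t = ∑ α ∈ Nat.antidiagonalTuple n d, w α * ∏ i, t i ^ α i) ↔
      ∃ a : Nat.antidiagonalTuple n d → ℝ, f = ∑ α, a α • weylMonomial α.1 := by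
  constructor
  · rintro ⟨w, hw⟩
    exact ⟨_, (funext hw).trans (sum_monomial_eq_sum_smul_weylMonomial w)⟩
  · rintro ⟨a, rfl⟩
    let w := Function.extend Subtype.val (fun α => a α * √(Nat.multinomial univ α.1)) 0
    have hw (α : Nat.antidiagonalTuple n d) : w α / √(Nat.multinomial univ α.1) = a α := by
      rw [show w α = _ from Subtype.val_injective.extend_apply _ _ α,
        mul_div_cancel_right₀ _ (sqrt_multinomial_ne_zero _)]
    refine ⟨w, fun t => ?_⟩
    have := congrFun (sum_monomial_eq_sum_smul_weylMonomial (d := d) w) t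
    simp only [hw] at this
    exact this.symm

end Weyl

/-- the RKHS of `K(x,t) = ⟨x,t⟩^d` on `ℝⁿ` is the space `H_d(ℝⁿ)` of
homogeneous polynomials of degree `d`, with the Weyl inner product
`⟨∑_{|α|=d} w_α t^α, ∑_{|α|=d} v_α t^α⟩ = ∑_{|α|=d} w_α v_α / C^d_α`. -/
theorem polynomial_kernel_rkhs_is_weyl (n d : ℕ) :
    ∃ S : HilbertFunSpace (EuclideanSpace ℝ (Fin n)),
      S.IsRKHS (fun x t : EuclideanSpace ℝ (Fin n) => (⟪x, t⟫) ^ d) ∧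
      Set.range S.toFun = {f : EuclideanSpace ℝ (Fin n) → ℝ | ∃ w : (Fin n → ℕ) → ℝ,
        ∀ t : EuclideanSpace ℝ (Fin n),
          f t = ∑ α ∈ Finset.Nat.antidiagonalTuple n d, w α * ∏ i, t i ^ α i} ∧
      ∀ (w v : (Fin n → ℕ) → ℝ) (F G : S.carrier),
        (∀ t : EuclideanSpace ℝ (Fin n),
          S.toFun F t = ∑ α ∈ Finset.Nat.antidiagonalTuple n d, w α * ∏ i, t i ^ α i) →
        (∀ t : EuclideanSpace ℝ (Fin n),
          S.toFun G t = ∑ α ∈ Finset.Nat.antidiagonalTuple n d, v α * ∏ i, t i ^ α i) →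
        ⟪F, G⟫ = ∑ α ∈ Finset.Nat.antidiagonalTuple n d,
          w α * v α / (Nat.multinomial Finset.univ α : ℝ) := by
  have hkernel : (fun x t : EuclideanSpace ℝ (Fin n) => ⟪x, t⟫ ^ d) =
      fun x t => ∑ α : Finset.Nat.antidiagonalTuple n d, weylMonomial α.1 x * weylMonomial α.1 t :=
    funext₂ inner_pow_eq_sum_weylMonomial
  have hφ := linearIndependent_weylMonomial n d
  refine ⟨.ofLinearIndependent hφ, hkernel ▸ HilbertFunSpace.isRKHS_ofLinearIndependent hφ,
    ?range, ?inner⟩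
  case range =>
    rw [HilbertFunSpace.range_toFun_ofLinearIndependent]
    exact Set.ext fun f => (exists_sum_monomial_iff f).symm
  case inner =>
    intro w v F G hF hG
    rw [HilbertFunSpace.inner_ofLinearIndependent hφ
      ((funext hF).trans (sum_monomial_eq_sum_smul_weylMonomial w))
      ((funext hG).trans (sum_monomial_eq_sum_smul_weylMonomial v)),
      ← Finset.sum_coe_sort (Finset.Nat.antidiagonalTuple n d)]
    refine Finset.sum_congr rfl fun α _ => ?_
    rw [div_mul_div_comm, Real.mul_self_sqrt (Nat.cast_nonneg _)]
end

section
/- Let n ∈ ℕ, σ > 0, μ ∈ ℝ with 0 < μ < 2, and c = (c₁,…,cₙ) ∈ ℝⁿ. Suppose that for each i the one-dimensional expansion exp(-(μ-1)(x_i-c_i)²/σ²) = ∑_{k=0}^∞ w_k (x_i-c_i)^k holds with w_{2k} = (-1)^k(μ-1)^k/(σ^{2k} k!) and w_j = 0 for odd j. Then ∑_{(k₁,…,kₙ) ∈ ℕⁿ} ∏_{i=1}^n (σ^{2k_i} k_i!/2^{k_i}) w_{k_i}² = ∏_{i=1}^n ( ∑_{k=0}^∞ (σ^{2k} k!/2^k)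 w_k² ) = (1/(μ(2-μ)))^{n/2}, all series converging. -/
/-!
The weight of index `2m` is `centralBinom m / 4 ^ m * x ^ m` with `x = (μ - 1) ^ 2 < 1`, and odd
weights vanish, so the one-dimensional series is the binomial series of `(1 - x) ^ (-1/2)` with
`1 - x = μ (2 - μ)`. All weights are nonnegative, so the sum over `ℕⁿ` of the products factors
into the `n`-th power of the one-dimensional sum.
-/

open Nat Polynomial

theorem Nat.centralBinom_mul_factorial_mul_factorial (m : ℕ) :
    centralBinom m * (m ! * m !) = (2 * m)! := by
  have h := choose_mul_factorial_mul_factorial (show m ≤ 2 * m by omega)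
  rwa [show 2 * m - m = m by omega, mul_assoc, ← centralBinom_eq_two_mul_choose] at h

theorem ascPochhammer_eval_half_mul_four_pow_mul_factorial (m : ℕ) :
    (ascPochhammer ℝ m).eval (1 / 2) * (4 ^ m * m !) = (2 * m)! := by
  induction m with
  | zero => simp
  | succ m ih =>
    rw [ascPochhammer_succ_eval, show 2 * (m + 1) = 2 * m + 1 + 1 by ring, factorial_succ,
      factorial_succ, factorial_succ]
    push_cast
    linear_combination (2 * (2 * m + 1) * (m + 1) : ℝ) * ih

theorem Ring.multichoose_half (m : ℕ) :
    Ring.multichoose (1 / 2 : ℝ) m = centralBinom m / 4 ^ m := by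
  have h := Ring.factorial_nsmul_multichoose_eq_ascPochhammer (1 / 2 : ℝ) m
  rw [ascPochhammer_smeval_eq_eval, nsmul_eq_mul] at h
  have hc : (centralBinom m : ℝ) * (m ! * m !) = (2 * m)! := by
    exact_mod_cast centralBinom_mul_factorial_mul_factorial m
  have := ascPochhammer_eval_half_mul_four_pow_mul_factorial m
  rw [← h, ← hc] at this
  field_simp at this ⊢
  linear_combination this

theorem Real.hasSum_centralBinom_div_four_pow_mul_pow {x : ℝ} (hx : |x| < 1) :
    HasSum (fun m ↦ centralBinom m / 4 ^ m * x ^ m) (1 / (1 - x) ^ (1 / 2 : ℝ)) := by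
  have h := (Real.one_div_one_sub_rpow_hasFPowerSeriesOnBall_zero (1 / 2)).hasSum
    (y := x) (by simpa [enorm_eq_nnnorm, ← NNReal.coe_lt_one] using hx)
  have hcoeff (m : ℕ) : Ring.choose (1 / 2 + m - 1 : ℝ) m = centralBinom m / 4 ^ m := by
    rw [← Ring.multichoose_eq, Ring.multichoose_half]
  simpa only [FormalMultilinearSeries.ofScalars_apply_eq, zero_add, smul_eq_mul, hcoeff] using h

theorem hasSum_fin_pi_prod_of_nonneg {β : Type*} {n : ℕ} {f : Fin n → β → ℝ} {S : Fin n → ℝ}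
    (hf : ∀ i, 0 ≤ f i) (hS : ∀ i, HasSum (f i) (S i)) :
    HasSum (fun K : Fin n → β ↦ ∏ i, f i (K i)) (∏ i, S i) := by
  induction n with
  | zero => simp
  | succ n ih =>
    set g : (Fin n → β) → ℝ := fun K ↦ ∏ i, f i.succ (K i)
    have htail : HasSum g (∏ i : Fin n, S i.succ) := ih (fun i ↦ hf i.succ) (fun i ↦ hS i.succ)
    have hg : 0 ≤ g := fun K ↦ Finset.prod_nonneg fun i _ ↦ hf i.succ (K i)
    have hsumm : Summable fun p : β × (Fin n → β) ↦ f 0 p.1 * g p.2 :=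
      (hS 0).summable.mul_of_nonneg htail.summable (hf 0) hg
    rw [Fin.prod_univ_succ, ← (Fin.consEquiv fun _ ↦ β).hasSum_iff]
    simpa [g, Function.comp_def, Fin.prod_univ_succ] using (hS 0).mul htail hsumm

theorem pow_mul_factorial_div_mul_sq_eq_centralBinom {σ : ℝ} (hσ : σ ≠ 0) (a : ℝ) (m : ℕ) :
    σ ^ (2 * (2 * m)) * ((2 * m)! : ℝ) / 2 ^ (2 * m) *
        ((-1) ^ m * a ^ m / (σ ^ (2 * m) * m !)) ^ 2 =
      centralBinom m / 4 ^ m * (a ^ 2) ^ m := by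
  have hc : ((2 * m)! : ℝ) = centralBinom m * (m ! * m !) := by
    exact_mod_cast (centralBinom_mul_factorial_mul_factorial m).symm
  have h4 : (4 : ℝ) ^ m = 2 ^ (2 * m) := by rw [pow_mul]; norm_num
  rw [hc, h4, div_pow, mul_pow, ← pow_mul, ← pow_mul, ← pow_mul, mul_pow, ← pow_mul,
    show ((-1 : ℝ) ^ (m * 2)) = 1 by rw [pow_mul']; norm_num]
  field_simp
  ring

theorem multi_dim_norm_product_general (n : ℕ) (σ μ : ℝ) (hσ : 0 < σ) (hμ0 : 0 < μ) (hμ2 : μ < 2)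
    (w : ℕ → ℝ)
    (hw_even : ∀ k : ℕ, w (2 * k) = (-1) ^ k * (μ - 1) ^ k / (σ ^ (2 * k) * (k.factorial : ℝ)))
    (hw_odd : ∀ j : ℕ, Odd j → w j = 0) :
    Summable (fun K : Fin n → ℕ =>
      ∏ i, σ ^ (2 * K i) * ((K i).factorial : ℝ) / 2 ^ (K i) * w (K i) ^ 2) ∧
    Summable (fun k : ℕ => σ ^ (2 * k) * (k.factorial : ℝ) / 2 ^ k * w k ^ 2) ∧
    (∑' K : Fin n → ℕ, ∏ i, σ ^ (2 * K i) * ((K i).factorial : ℝ) / 2 ^ (K i) * w (K i) ^ 2)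
      = (∏ _i : Fin n, ∑' k : ℕ, σ ^ (2 * k) * (k.factorial : ℝ) / 2 ^ k * w k ^ 2) ∧
    (∏ _i : Fin n, ∑' k : ℕ, σ ^ (2 * k) * (k.factorial : ℝ) / 2 ^ k * w k ^ 2)
      = (1 / (μ * (2 - μ))) ^ ((n : ℝ) / 2) := by
  set f : ℕ → ℝ := fun k ↦ σ ^ (2 * k) * (k ! : ℝ) / 2 ^ k * w k ^ 2
  have hpos : 0 < μ * (2 - μ) := by nlinarith
  have heven : HasSum (fun k ↦ f (2 * k)) (1 / (μ * (2 - μ)) ^ (1 / 2 : ℝ)) := by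
    have h := Real.hasSum_centralBinom_div_four_pow_mul_pow (x := (μ - 1) ^ 2)
      (by rw [abs_lt]; constructor <;> nlinarith)
    rw [show 1 - (μ - 1) ^ 2 = μ * (2 - μ) by ring] at h
    simpa only [f, hw_even, pow_mul_factorial_div_mul_sq_eq_centralBinom hσ.ne'] using h
  have hodd : HasSum (fun k ↦ f (2 * k + 1)) 0 := by
    simp [f, hw_odd _ (odd_two_mul_add_one _)]
  have hf := add_zero (1 / (μ * (2 - μ)) ^ (1 / 2 : ℝ)) ▸ heven.even_add_odd hodd
  have hpi := hasSum_fin_pi_prod_of_nonneg (n := n) (f := fun _ ↦ f)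
    (fun _ k ↦ by positivity) (fun _ ↦ hf)
  refine ⟨hpi.summable, hf.summable, by rw [hpi.tsum_eq, hf.tsum_eq], ?_⟩
  rw [hf.tsum_eq, Finset.prod_const, Finset.card_fin, one_div, one_div, ← Real.inv_rpow hpos.le,
    ← Real.rpow_natCast, ← Real.rpow_mul (by positivity)]
  ring_nf

/-- if `exp(-(μ-1)(x_i-c_i)²/σ²) = ∑_k w_k (x_i-c_i)^k` with
`w_{2k} = (-1)^k(μ-1)^k/(σ^{2k}k!)` and `w_j = 0` for odd `j`, then
`∑_{(k₁,…,kₙ)} ∏_i (σ^{2k_i}k_i!/2^{k_i}) w_{k_i}² = ∏_i (∑_k (σ^{2k}k!/2^k) w_k²)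
 = (1/(μ(2-μ)))^{n/2}`, all series converging. -/
theorem multi_dim_norm_product (n : ℕ) (σ μ : ℝ) (hσ : 0 < σ) (hμ0 : 0 < μ) (hμ2 : μ < 2)
    (c : EuclideanSpace ℝ (Fin n)) (w : ℕ → ℝ)
    (hexp : ∀ (i : Fin n) (x : ℝ),
      HasSum (fun k : ℕ => w k * (x - c i) ^ k)
        (Real.exp (-((μ - 1) * (x - c i) ^ 2) / σ ^ 2)))
    (hw_even : ∀ k : ℕ, w (2 * k) = (-1) ^ k * (μ - 1) ^ k / (σ ^ (2 * k) * (k.factorial : ℝ)))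
    (hw_odd : ∀ j : ℕ, Odd j → w j = 0) :
    Summable (fun K : Fin n → ℕ =>
      ∏ i, σ ^ (2 * K i) * ((K i).factorial : ℝ) / 2 ^ (K i) * w (K i) ^ 2) ∧
    Summable (fun k : ℕ => σ ^ (2 * k) * (k.factorial : ℝ) / 2 ^ k * w k ^ 2) ∧
    (∑' K : Fin n → ℕ, ∏ i, σ ^ (2 * K i) * ((K i).factorial : ℝ) / 2 ^ (K i) * w (K i) ^ 2)
      = (∏ _i : Fin n, ∑' k : ℕ, σ ^ (2 * k) * (k.factorial : ℝ) / 2 ^ k * w k ^ 2) ∧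
    (∏ _i : Fin n, ∑' k : ℕ, σ ^ (2 * k) * (k.factorial : ℝ) / 2 ^ k * w k ^ 2)
      = (1 / (μ * (2 - μ))) ^ ((n : ℝ) / 2) :=
  multi_dim_norm_product_general n σ μ hσ hμ0 hμ2 w hw_even hw_odd
end
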